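/- arXiv:1801.01740 — 5 statements merged into one kernel-verified Lean document; each statement's English description precedes it below -/
import Mathlib

section
/- For every probability measure μ on X, the log-partition function A(·, μ) is twice continuously differentiable on ℝ^L and its second derivative at λ is the covariance form of f under E(λ, μ): for all u, v ∈ ℝ^L, D²A(λ, μ)(u, v) = ∫_X ⟨u, f⟩⟨v, f⟩ dE(λ, μ) − (∫_X ⟨u, f⟩ dE(λ, μ))(∫_X ⟨v, f⟩ dE(λ, μ)). -/
/-!
Differentiating under the integral sign (dominated on unit balls, since `f` is bounded), the map
`l ↦ ∫ exp ⟪l, f x⟫ • g x ∂μ` is differentiable for every bounded `g`, and its derivative is a map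
of the same form for the bounded integrand `x ↦ ⟪f x, ·⟫ • g x`. Iterating, the partition function
`Z` is `C^∞`, hence so is `A = log Z`. The chain rule gives `D²A = D²Z / Z - DZ ⊗ DZ / Z²`, and
dividing a `μ`-integral weighted by `exp ⟪l, f⟫` by `Z l` is integrating against `E(l, μ)`.
-/

open MeasureTheory
open scoped RealInnerProductSpace ContDiff

universe u

section Calculus

variable {V : Type*} [NormedAddCommGroup V] [NormedSpace ℝ V]

lemma fderiv_fderiv_log_apply {Z : V → ℝ} (hZ : Differentiable ℝ Z) (hZ0 : ∀ x, Z x ≠ 0)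
    {l : V} (hZl : DifferentiableAt ℝ (fderiv ℝ Z) l) (u v : V) :
    fderiv ℝ (fderiv ℝ fun x ↦ Real.log (Z x)) l u v =
      fderiv ℝ (fderiv ℝ Z) l u v / Z l - fderiv ℝ Z l u * fderiv ℝ Z l v / Z l ^ 2 := by
  have hlog : fderiv ℝ (fun x ↦ Real.log (Z x)) = fun x ↦ (Z x)⁻¹ • fderiv ℝ Z x :=
    funext fun x ↦ ((hZ x).hasFDerivAt.log (hZ0 x)).fderiv
  have hinv : HasFDerivAt (fun x ↦ (Z x)⁻¹) (-(Z l ^ 2)⁻¹ • fderiv ℝ Z l) l :=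
    (hasDerivAt_inv (hZ0 l)).comp_hasFDerivAt l (hZ l).hasFDerivAt
  have hD : HasFDerivAt (fun x ↦ (Z x)⁻¹ • fderiv ℝ Z x) _ l := hinv.smul hZl.hasFDerivAt
  rw [hlog, hD.fderiv]
  simp only [neg_smul, add_apply, smul_apply, ContinuousLinearMap.smulRight_apply, neg_apply,
    smul_eq_mul]
  ring

end Calculus

section ExpInnerIntegral

variable {X : Type*} {E F : Type u}
  [NormedAddCommGroup E] [InnerProductSpace ℝ E] [NormedAddCommGroup F] [NormedSpace ℝ F]

lemma norm_exp_inner_smul_le (l a : E) (v : F) :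
    ‖Real.exp ⟪l, a⟫ • v‖ ≤ Real.exp (‖l‖ * ‖a‖) * ‖v‖ := by
  rw [norm_smul, Real.norm_of_nonneg (Real.exp_nonneg _)]
  gcongr
  exact real_inner_le_norm l a

lemma hasFDerivAt_exp_inner_smul (a : E) (v : F) (l : E) :
    HasFDerivAt (fun l ↦ Real.exp ⟪l, a⟫ • v)
      (Real.exp ⟪l, a⟫ • (innerSL ℝ a).smulRight v) l := by
  have hinner : HasFDerivAt (fun l ↦ ⟪l, a⟫) (innerSL ℝ a) l := by
    convert (innerSL ℝ a).hasFDerivAt using 1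
    exact funext fun l ↦ real_inner_comm a l
  convert hinner.exp.smul_const v using 1
  ext
  simp [smul_smul]

variable {f : X → E} {g : X → F} {B C : ℝ}

lemma norm_innerSL_smulRight_le (hfB : ∀ x, ‖f x‖ ≤ B) (hgC : ∀ x, ‖g x‖ ≤ C) (x : X) :
    ‖(innerSL ℝ (f x)).smulRight (g x)‖ ≤ B * C := by
  rw [ContinuousLinearMap.norm_smulRight_apply, innerSL_apply_norm]
  exact mul_le_mul (hfB x) (hgC x) (norm_nonneg _) ((norm_nonneg _).trans (hfB x))

variable [MeasurableSpace X] {μ : Measure X}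

lemma MeasureTheory.AEStronglyMeasurable.exp_inner_smul (hf : AEStronglyMeasurable f μ)
    (hg : AEStronglyMeasurable g μ) (l : E) :
    AEStronglyMeasurable (fun x ↦ Real.exp ⟪l, f x⟫ • g x) μ :=
  (Real.continuous_exp.comp_aestronglyMeasurable (aestronglyMeasurable_const.inner hf)).smul hg

lemma MeasureTheory.AEStronglyMeasurable.innerSL_smulRight (hf : AEStronglyMeasurable f μ)
    (hg : AEStronglyMeasurable g μ) :
    AEStronglyMeasurable (fun x ↦ (innerSL ℝ (f x)).smulRight (g x)) μ :=
  (ContinuousLinearMap.smulRightL ℝ E F).continuous₂.comp_aestronglyMeasurable₂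
    ((innerSL ℝ).continuous.comp_aestronglyMeasurable hf) hg

lemma integrable_exp_inner_smul [IsFiniteMeasure μ] (hf : AEStronglyMeasurable f μ)
    (hfB : ∀ x, ‖f x‖ ≤ B) (hg : AEStronglyMeasurable g μ) (hgC : ∀ x, ‖g x‖ ≤ C) (l : E) :
    Integrable (fun x ↦ Real.exp ⟪l, f x⟫ • g x) μ :=
  .of_bound (hf.exp_inner_smul hg l) (Real.exp (‖l‖ * B) * C) <| .of_forall fun x ↦
    (norm_exp_inner_smul_le l (f x) (g x)).trans <| by
      have hB : 0 ≤ B := (norm_nonneg _).trans (hfB x)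
      gcongr
      exacts [hfB x, hgC x]

noncomputable def expInnerIntegral (μ : Measure X) (f : X → E) (g : X → F) (l : E) : F :=
  ∫ x, Real.exp ⟪l, f x⟫ • g x ∂μ

lemma expInnerIntegral_apply {g : X → E →L[ℝ] F} {l : E}
    (hg : Integrable (fun x ↦ Real.exp ⟪l, f x⟫ • g x) μ) (u : E) :
    expInnerIntegral μ f g l u = expInnerIntegral μ f (fun x ↦ g x u) l :=
  ContinuousLinearMap.integral_apply hg u

lemma withDensity_ofReal_exp_sub_log_eq_tilted (g : X → ℝ) (hg : 0 < ∫ x, Real.exp (g x) ∂μ) :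
    μ.withDensity (fun x ↦ ENNReal.ofReal (Real.exp (g x - Real.log (∫ x, Real.exp (g x) ∂μ)))) =
      μ.tilted g := by
  simp only [Real.exp_sub, Real.exp_log hg, Measure.tilted]

lemma integral_tilted_inner (l : E) (h : X → F) :
    ∫ x, h x ∂(μ.tilted fun x ↦ ⟪l, f x⟫) =
      (∫ x, Real.exp ⟪l, f x⟫ ∂μ)⁻¹ • expInnerIntegral μ f h l := by
  simp only [integral_tilted, expInnerIntegral, div_eq_inv_mul, mul_smul, integral_smul]

section Derivatives

variable [IsFiniteMeasure μ] (hf : AEStronglyMeasurable f μ) (hfB : ∀ x, ‖f x‖ ≤ B)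
  (hg : AEStronglyMeasurable g μ) (hgC : ∀ x, ‖g x‖ ≤ C)
include hf hfB hg hgC

lemma hasFDerivAt_expInnerIntegral (l₀ : E) :
    HasFDerivAt (expInnerIntegral μ f g)
      (expInnerIntegral μ f (fun x ↦ (innerSL ℝ (f x)).smulRight (g x)) l₀) l₀ := by
  have hg' := hf.innerSL_smulRight hg
  refine hasFDerivAt_integral_of_dominated_of_fderiv_le (Metric.ball_mem_nhds l₀ one_pos)
    (bound := fun _ ↦ Real.exp ((‖l₀‖ + 1) * B) * (B * C))
    (.of_forall (hf.exp_inner_smul hg)) (integrable_exp_inner_smul hf hfB hg hgC l₀)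
    (hf.exp_inner_smul hg' l₀) (.of_forall fun x l hl ↦ ?_) (integrable_const _)
    (.of_forall fun x l _ ↦ hasFDerivAt_exp_inner_smul (f x) (g x) l)
  have hB : 0 ≤ B := (norm_nonneg _).trans (hfB x)
  have hl : ‖l‖ ≤ ‖l₀‖ + 1 := norm_le_norm_add_const_of_dist_le (Metric.mem_ball.1 hl).le
  refine (norm_exp_inner_smul_le l (f x) ((innerSL ℝ (f x)).smulRight (g x))).trans ?_
  gcongr
  exacts [hfB x, norm_innerSL_smulRight_le hfB hgC x]

lemma differentiable_expInnerIntegral : Differentiable ℝ (expInnerIntegral μ f g) :=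
  fun l ↦ (hasFDerivAt_expInnerIntegral hf hfB hg hgC l).differentiableAt

lemma fderiv_expInnerIntegral :
    fderiv ℝ (expInnerIntegral μ f g) =
      expInnerIntegral μ f (fun x ↦ (innerSL ℝ (f x)).smulRight (g x)) :=
  funext fun l ↦ (hasFDerivAt_expInnerIntegral hf hfB hg hgC l).fderiv

-- `E` and `F` share a universe so that the induction may replace `F` by `E →L[ℝ] F`.
theorem contDiff_expInnerIntegral : ContDiff ℝ ∞ (expInnerIntegral μ f g) := by
  refine contDiff_infty.2 fun n ↦ ?_
  induction n generalizing F g C with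
  | zero => exact contDiff_zero.2 (differentiable_expInnerIntegral hf hfB hg hgC).continuous
  | succ n ih =>
    rw [Nat.cast_succ, contDiff_succ_iff_fderiv]
    refine ⟨differentiable_expInnerIntegral hf hfB hg hgC, by simp, ?_⟩
    rw [fderiv_expInnerIntegral hf hfB hg hgC]
    exact ih (hf.innerSL_smulRight hg) (norm_innerSL_smulRight_le hfB hgC)

lemma fderiv_expInnerIntegral_apply (l u : E) :
    fderiv ℝ (expInnerIntegral μ f g) l u = expInnerIntegral μ f (fun x ↦ ⟪u, f x⟫ • g x) l := by
  rw [fderiv_expInnerIntegral hf hfB hg hgC, expInnerIntegral_apply (integrable_exp_inner_smul hf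
    hfB (hf.innerSL_smulRight hg) (norm_innerSL_smulRight_le hfB hgC) l)]
  simp only [ContinuousLinearMap.smulRight_apply, innerSL_apply_apply, real_inner_comm u]

lemma fderiv_fderiv_expInnerIntegral_apply (l u v : E) :
    fderiv ℝ (fderiv ℝ (expInnerIntegral μ f g)) l u v =
      expInnerIntegral μ f (fun x ↦ ⟪u, f x⟫ • ⟪v, f x⟫ • g x) l := by
  have hg' := hf.innerSL_smulRight hg
  have hg'C := norm_innerSL_smulRight_le hfB hgC
  have hg'' := integrable_exp_inner_smul hf hfB (hf.innerSL_smulRight hg')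
    (norm_innerSL_smulRight_le hfB hg'C) l
  rw [fderiv_expInnerIntegral hf hfB hg hgC, fderiv_expInnerIntegral hf hfB hg' hg'C,
    expInnerIntegral_apply hg'',
    expInnerIntegral_apply (g := fun x ↦ (innerSL ℝ (f x)).smulRight
      ((innerSL ℝ (f x)).smulRight (g x)) u) (hg''.apply_continuousLinearMap u)]
  simp only [ContinuousLinearMap.smulRight_apply, smul_apply,
    innerSL_apply_apply, real_inner_comm u, real_inner_comm v]

end Derivatives

end ExpInnerIntegral

theorem logPartition_second_derivative_general
    {X : Type*} [MeasurableSpace X] {L : ℕ}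
    (μ : Measure X) [IsProbabilityMeasure μ]
    (f : X → EuclideanSpace ℝ (Fin L)) (hf_meas : Measurable f)
    (B : ℝ) (hf_bdd : ∀ x, ‖f x‖ ≤ B)
    (A : EuclideanSpace ℝ (Fin L) → ℝ)
    (hA : ∀ l, A l = Real.log (∫ x, Real.exp ⟪l, f x⟫ ∂μ)) :
    ContDiff ℝ 2 A ∧
    ∀ (l u v : EuclideanSpace ℝ (Fin L)),
      fderiv ℝ (fderiv ℝ A) l u v =
        (∫ x, ⟪u, f x⟫ * ⟪v, f x⟫
            ∂(μ.withDensity (fun x => ENNReal.ofReal (Real.exp (⟪l, f x⟫ - A l)))))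
        - (∫ x, ⟪u, f x⟫
            ∂(μ.withDensity (fun x => ENNReal.ofReal (Real.exp (⟪l, f x⟫ - A l)))))
          * (∫ x, ⟪v, f x⟫
            ∂(μ.withDensity (fun x => ENNReal.ofReal (Real.exp (⟪l, f x⟫ - A l))))) := by
  have hf := hf_meas.aestronglyMeasurable (μ := μ)
  have h1 : AEStronglyMeasurable (fun _ : X ↦ (1 : ℝ)) μ := aestronglyMeasurable_const
  have h1B : ∀ x : X, ‖(1 : ℝ)‖ ≤ 1 := fun _ ↦ norm_one.le
  set Z := expInnerIntegral μ f fun _ ↦ (1 : ℝ) with hZ_def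
  have hZ_eq : ∀ l, Z l = ∫ x, Real.exp ⟪l, f x⟫ ∂μ := fun l ↦ by
    simp only [hZ_def, expInnerIntegral, smul_eq_mul, mul_one]
  have hZ_pos : ∀ l, 0 < Z l := fun l ↦ by
    have hint := integrable_exp_inner_smul hf hf_bdd h1 h1B l
    simp only [smul_eq_mul, mul_one] at hint
    exact hZ_eq l ▸ integral_exp_pos hint
  have hZ : ContDiff ℝ ∞ Z := contDiff_expInnerIntegral hf hf_bdd h1 h1B
  have hA_eq : A = fun l ↦ Real.log (Z l) := funext fun l ↦ by rw [hA, hZ_eq]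
  refine ⟨hA_eq ▸ (hZ.log fun l ↦ (hZ_pos l).ne').of_le (by norm_cast), fun l u v ↦ ?_⟩
  rw [hA l, withDensity_ofReal_exp_sub_log_eq_tilted _ (hZ_eq l ▸ hZ_pos l), hA_eq,
    fderiv_fderiv_log_apply (hZ.differentiable (by simp)) (fun l ↦ (hZ_pos l).ne')
      ((contDiff_infty_iff_fderiv.1 hZ).2.differentiable (by simp) l),
    fderiv_fderiv_expInnerIntegral_apply hf hf_bdd h1 h1B,
    fderiv_expInnerIntegral_apply hf hf_bdd h1 h1B, fderiv_expInnerIntegral_apply hf hf_bdd h1 h1B]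
  simp only [integral_tilted_inner, ← hZ_eq, smul_eq_mul, mul_one]
  ring

/-- The log-partition function A(·, μ) is C² on ℝ^L and its second
derivative at λ is the covariance form of f under the exponential family member
E(λ, μ) = μ.withDensity (exp(⟪λ, f⟫ − A(λ, μ))). -/
theorem logPartition_second_derivative
    {X : Type*} [MeasurableSpace X] {L : ℕ} (hL : 0 < L)
    (μ : Measure X) [IsProbabilityMeasure μ]
    (f : X → EuclideanSpace ℝ (Fin L)) (hf_meas : Measurable f)
    (B : ℝ) (hf_bdd : ∀ x, ‖f x‖ ≤ B)
    (A : EuclideanSpace ℝ (Fin L) → ℝ)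
    (hA : ∀ l, A l = Real.log (∫ x, Real.exp ⟪l, f x⟫ ∂μ)) :
    ContDiff ℝ 2 A ∧
    ∀ (l u v : EuclideanSpace ℝ (Fin L)),
      fderiv ℝ (fderiv ℝ A) l u v =
        (∫ x, ⟪u, f x⟫ * ⟪v, f x⟫
            ∂(μ.withDensity (fun x => ENNReal.ofReal (Real.exp (⟪l, f x⟫ - A l)))))
        - (∫ x, ⟪u, f x⟫
            ∂(μ.withDensity (fun x => ENNReal.ofReal (Real.exp (⟪l, f x⟫ - A l)))))
          * (∫ x, ⟪v, f x⟫
            ∂(μ.withDensity (fun x => ENNReal.ofReal (Real.exp (⟪l, f x⟫ - A l))))) :=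
  logPartition_second_derivative_general μ f hf_meas B hf_bdd A hA
end

section
/- Assume that the system {1, f_1, …, f_L} is linearly independent modulo μ. Then the moment map λ ↦ ∫_X f dE(λ, μ) from ℝ^L to ℝ^L is injective; in particular, for a given moment vector m the Lagrange multiplier λ solving ∫_X f dE(λ, μ) = m, if it exists, is unique. -/
open MeasureTheory Real
open scoped RealInnerProductSpace

/-!
Write `u_λ = ⟪λ, f⟫ - A λ` for the log-density of `E(λ, μ)` and `m(λ)` for its mean. Since both
densities integrate to `1`,
`∫ (u_λ - u_λ') (exp u_λ - exp u_λ') dμ = ⟪λ - λ', m(λ) - m(λ')⟫`.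
The integrand is nonnegative because `exp` is increasing, and vanishes only where `u_λ = u_λ'`,
that is on the zero set of the affine function `A λ' - A λ + ⟪λ - λ', f⟫`. If `m(λ) = m(λ')` this
zero set has full measure, and linear independence modulo `μ` then forces `λ = λ'`.
-/

theorem sub_mul_exp_sub_exp_pos {a b : ℝ} (h : a ≠ b) : 0 < (a - b) * (exp a - exp b) := by
  rcases h.lt_or_gt with h | h
  · exact mul_pos_of_neg_of_neg (sub_neg.2 h) (sub_neg.2 (exp_lt_exp.2 h))
  · exact mul_pos (sub_pos.2 h) (sub_pos.2 (exp_lt_exp.2 h))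

theorem sub_mul_exp_sub_exp_nonneg (a b : ℝ) : 0 ≤ (a - b) * (exp a - exp b) := by
  rcases eq_or_ne a b with rfl | h
  · simp
  · exact (sub_mul_exp_sub_exp_pos h).le

theorem inner_sub_mul_sub_eq {E : Type*} [NormedAddCommGroup E] [InnerProductSpace ℝ E]
    (d y : E) (c r₁ r₂ : ℝ) :
    (⟪d, y⟫ - c) * (r₁ - r₂) = ⟪d, r₁ • y - r₂ • y⟫ - c * (r₁ - r₂) := by
  rw [inner_sub_right, real_inner_smul_right, real_inner_smul_right]
  ring

section

variable {X E : Type*} [MeasurableSpace X] {μ : Measure X}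
  [NormedAddCommGroup E] [InnerProductSpace ℝ E]

def LinearIndependentMod (μ : Measure X) (f : X → E) : Prop :=
  ∀ (l0 : ℝ) (l : E), (l0, l) ≠ (0, 0) → μ {x | l0 + ⟪l, f x⟫ = 0} = 0

theorem LinearIndependentMod.eq_zero_of_ae_eq_zero [NeZero μ] {f : X → E}
    (hf : LinearIndependentMod μ f) {l0 : ℝ} {l : E} (h : ∀ᵐ x ∂μ, l0 + ⟪l, f x⟫ = 0) :
    (l0, l) = (0, 0) := by
  by_contra hne
  have hfalse : ∀ᵐ x ∂μ, False := by
    filter_upwards [h, measure_eq_zero_iff_ae_notMem.1 (hf l0 l hne)] with x hx hx'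
    exact hx' hx
  exact NeZero.ne μ (ae_eq_bot.1 (Filter.eventually_false_iff_eq_bot.1 hfalse))

theorem ae_eq_of_integral_sub_mul_exp_sub_exp_eq_zero {u v : X → ℝ}
    (hint : Integrable (fun x => (u x - v x) * (exp (u x) - exp (v x))) μ)
    (h : ∫ x, (u x - v x) * (exp (u x) - exp (v x)) ∂μ = 0) : u =ᵐ[μ] v := by
  have hzero :=
    (integral_eq_zero_iff_of_nonneg (fun x => sub_mul_exp_sub_exp_nonneg _ _) hint).1 h
  filter_upwards [hzero] with x hx
  by_contra hne
  exact (sub_mul_exp_sub_exp_pos hne).ne' hx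

theorem integral_exp_sub_log_integral_exp [NeZero μ] {g : X → ℝ}
    (hg : Integrable (fun x => exp (g x)) μ) :
    ∫ x, exp (g x - log (∫ y, exp (g y) ∂μ)) ∂μ = 1 := by
  simp_rw [exp_sub, integral_div, exp_log (integral_exp_pos hg)]
  exact div_self (integral_exp_pos hg).ne'

theorem integral_withDensity_ofReal_eq_integral_smul {ρ : X → ℝ} (hρ : Measurable ρ)
    (hρ_nonneg : ∀ x, 0 ≤ ρ x) (g : X → E) :
    ∫ x, g x ∂μ.withDensity (fun x => ENNReal.ofReal (ρ x)) = ∫ x, ρ x • g x ∂μ := by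
  rw [integral_withDensity_eq_integral_toReal_smul hρ.ennreal_ofReal
    (ae_of_all _ fun _ => ENNReal.ofReal_lt_top)]
  simp_rw [ENNReal.toReal_ofReal (hρ_nonneg _)]

variable {f : X → E}

theorem integrable_exp_inner_sub [IsFiniteMeasure μ] {B : ℝ} (hf : AEStronglyMeasurable f μ)
    (hB : ∀ x, ‖f x‖ ≤ B) (l : E) (a : ℝ) : Integrable (fun x => exp (⟪l, f x⟫ - a)) μ := by
  refine .of_bound (continuous_exp.comp_aestronglyMeasurable
    ((aestronglyMeasurable_const.inner hf).sub aestronglyMeasurable_const))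
    (exp (‖l‖ * B - a)) (ae_of_all _ fun x => ?_)
  rw [norm_of_nonneg (exp_pos _).le, exp_le_exp, sub_le_sub_iff_right]
  exact (real_inner_le_norm l (f x)).trans (mul_le_mul_of_nonneg_left (hB x) (norm_nonneg l))

variable {ρ₁ ρ₂ : X → ℝ}

theorem integrable_inner_sub_mul_sub (h₁ : Integrable ρ₁ μ) (h₂ : Integrable ρ₂ μ)
    (hf₁ : Integrable (fun x => ρ₁ x • f x) μ) (hf₂ : Integrable (fun x => ρ₂ x • f x) μ)
    (d : E) (c : ℝ) : Integrable (fun x => (⟪d, f x⟫ - c) * (ρ₁ x - ρ₂ x)) μ := by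
  simp_rw [inner_sub_mul_sub_eq]
  exact ((hf₁.sub hf₂).const_inner d).sub ((h₁.sub h₂).const_mul c)

theorem integral_inner_sub_mul_sub [CompleteSpace E] (h₁ : Integrable ρ₁ μ)
    (h₂ : Integrable ρ₂ μ) (hf₁ : Integrable (fun x => ρ₁ x • f x) μ)
    (hf₂ : Integrable (fun x => ρ₂ x • f x) μ) (d : E) (c : ℝ) :
    ∫ x, (⟪d, f x⟫ - c) * (ρ₁ x - ρ₂ x) ∂μ
      = ⟪d, ∫ x, ρ₁ x • f x ∂μ - ∫ x, ρ₂ x • f x ∂μ⟫ - c * (∫ x, ρ₁ x ∂μ - ∫ x, ρ₂ x ∂μ) := by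
  have hv : Integrable (fun x => ρ₁ x • f x - ρ₂ x • f x) μ := hf₁.sub hf₂
  have hr : Integrable (fun x => ρ₁ x - ρ₂ x) μ := h₁.sub h₂
  simp_rw [inner_sub_mul_sub_eq]
  rw [integral_sub (hv.const_inner d) (hr.const_mul c), integral_inner hv, integral_const_mul,
    integral_sub hf₁ hf₂, integral_sub h₁ h₂]

end

theorem moment_map_injective_general
    {X : Type*} [MeasurableSpace X] {L : ℕ}
    (μ : Measure X) [IsProbabilityMeasure μ]
    (f : X → EuclideanSpace ℝ (Fin L)) (hf_meas : Measurable f)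
    (B : ℝ) (hf_bdd : ∀ x, ‖f x‖ ≤ B)
    (hindep : ∀ (l0 : ℝ) (l : EuclideanSpace ℝ (Fin L)),
      (l0, l) ≠ (0, 0) → μ {x | l0 + ⟪l, f x⟫ = 0} = 0)
    (A : EuclideanSpace ℝ (Fin L) → ℝ)
    (hA : ∀ l, A l = Real.log (∫ x, Real.exp ⟪l, f x⟫ ∂μ)) :
    Function.Injective (fun l : EuclideanSpace ℝ (Fin L) =>
      ∫ x, f x
        ∂(μ.withDensity (fun x => ENNReal.ofReal (Real.exp (⟪l, f x⟫ - A l))))) := by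
  intro l₁ l₂ hmom
  have hρ := integrable_exp_inner_sub (μ := μ) hf_meas.aestronglyMeasurable hf_bdd
  have hρf (l : EuclideanSpace ℝ (Fin L)) :
      Integrable (fun x => exp (⟪l, f x⟫ - A l) • f x) μ :=
    (hρ l _).smul_bdd B hf_meas.aestronglyMeasurable (ae_of_all _ hf_bdd)
  have hZ (l : EuclideanSpace ℝ (Fin L)) : ∫ x, exp (⟪l, f x⟫ - A l) ∂μ = 1 := by
    rw [hA]
    exact integral_exp_sub_log_integral_exp (by simpa using hρ l 0)
  have hmom' : ∫ x, exp (⟪l₁, f x⟫ - A l₁) • f x ∂μ = ∫ x, exp (⟪l₂, f x⟫ - A l₂) • f x ∂μ := by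
    simpa only [integral_withDensity_ofReal_eq_integral_smul
      ((measurable_const.inner hf_meas).sub_const _).exp fun _ => (exp_pos _).le] using hmom
  have hdiff (x : X) : (⟪l₁, f x⟫ - A l₁) - (⟪l₂, f x⟫ - A l₂)
      = ⟪l₁ - l₂, f x⟫ - (A l₁ - A l₂) := by
    rw [inner_sub_left]; ring
  have hae : (fun x => ⟪l₁, f x⟫ - A l₁) =ᵐ[μ] fun x => ⟪l₂, f x⟫ - A l₂ := by
    refine ae_eq_of_integral_sub_mul_exp_sub_exp_eq_zero ?_ ?_ <;> simp_rw [hdiff]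
    · exact integrable_inner_sub_mul_sub (hρ _ _) (hρ _ _) (hρf l₁) (hρf l₂) _ _
    · rw [integral_inner_sub_mul_sub (hρ _ _) (hρ _ _) (hρf l₁) (hρf l₂), hmom', hZ, hZ]
      simp
  have hzero := LinearIndependentMod.eq_zero_of_ae_eq_zero hindep (l0 := A l₂ - A l₁)
    (l := l₁ - l₂) (hae.mono fun x hx => by rw [inner_sub_left]; linarith)
  exact sub_eq_zero.1 congr($hzero.2)

/-- If {1, f_1, …, f_L} is linearly independent modulo μ, then the moment
map λ ↦ ∫ f dE(λ, μ) is injective; in particular the Lagrange multiplier solving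
∫ f dE(λ, μ) = m, if it exists, is unique. -/
theorem moment_map_injective
    {X : Type*} [MeasurableSpace X] {L : ℕ} (hL : 0 < L)
    (μ : Measure X) [IsProbabilityMeasure μ]
    (f : X → EuclideanSpace ℝ (Fin L)) (hf_meas : Measurable f)
    (B : ℝ) (hf_bdd : ∀ x, ‖f x‖ ≤ B)
    (hindep : ∀ (l0 : ℝ) (l : EuclideanSpace ℝ (Fin L)),
      (l0, l) ≠ (0, 0) → μ {x | l0 + ⟪l, f x⟫ = 0} = 0)
    (A : EuclideanSpace ℝ (Fin L) → ℝ)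
    (hA : ∀ l, A l = Real.log (∫ x, Real.exp ⟪l, f x⟫ ∂μ)) :
    Function.Injective (fun l : EuclideanSpace ℝ (Fin L) =>
      ∫ x, f x
        ∂(μ.withDensity (fun x => ENNReal.ofReal (Real.exp (⟪l, f x⟫ - A l))))) :=
  moment_map_injective_general μ f hf_meas B hf_bdd hindep A hA
end

section
/- For every Λ > 0 there exists a constant C, depending only on Λ and ‖f‖_∞, such that for all λ_1, λ_2 ∈ ℝ^L with ‖λ_1‖ ≤ Λ and ‖λ_2‖ ≤ Λ and all probability measures μ_1, μ_2 on X, the corresponding exponential family members satisfy ‖E(λ_1, μ_1) − E(λ_2, μ_2)‖_TV ≤ C (‖λ_1 − λ_2‖ + ‖μ_1 − μ_2‖_TV). -/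
/-!
`E(λ, μ)` is Mathlib's tilted measure `μ.tilted φ` for the potential `φ = ⟪λ, f ·⟫`: its density
is `exp φ / Z` with `Z = ∫ exp φ dμ`. When `|φ| ≤ R = Λ B`, we have `Z ≥ e^{-R}` and
`exp φ / Z ≤ e^{2R}`, and `exp φ / Z` is Lipschitz in `φ` and `Z`.

All total variation estimates rest on one observation: if `ρ₁ + σ₂ = ρ₂ + σ₁`, then
`|ρ₁ - ρ₂| ≤ σ₁ + σ₂`. Hence changing a density by at most `δ` pointwise moves the measure by at
most `δ μ(X)`, and changing the base measure under a density bounded by `M` moves it by at most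
`M ‖μ₁ - μ₂‖_TV` (apply the observation to `μ₁ + n = μ₂ + p`, where `p - n` is the Jordan
decomposition of `μ₁ - μ₂`). This is used once for the normalisers `Z` and once for the densities.
-/

open MeasureTheory Real Set
open scoped ENNReal RealInnerProductSpace

lemma abs_exp_sub_exp_le {a b M : ℝ} (ha : a ≤ M) (hb : b ≤ M) :
    |exp a - exp b| ≤ exp M * |a - b| := by
  wlog hba : b ≤ a generalizing a b
  · rw [abs_sub_comm, abs_sub_comm a]
    exact this hb ha (le_of_not_ge hba)
  have h : 1 - exp (b - a) ≤ a - b := by linarith [add_one_le_exp (b - a)]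
  have hexp : exp b = exp a * exp (b - a) := by rw [← exp_add]; ring_nf
  rw [abs_of_nonneg (sub_nonneg.2 (exp_le_exp.2 hba)), abs_of_nonneg (sub_nonneg.2 hba), hexp]
  calc exp a - exp a * exp (b - a) = exp a * (1 - exp (b - a)) := by ring
    _ ≤ exp M * (a - b) :=
      mul_le_mul (exp_le_exp.2 ha) h (by linarith [exp_le_one_iff.2 (sub_nonpos.2 hba)])
        (exp_pos M).le

lemma abs_div_sub_div_le {a b c d k : ℝ} (hb : 0 < b) (hd : 0 < d) (hbk : b⁻¹ ≤ k)
    (hdk : d⁻¹ ≤ k) : |a / b - c / d| ≤ k * |a - c| + k ^ 2 * |c| * |b - d| := by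
  have hk : 0 ≤ k := (inv_pos.2 hb).le.trans hbk
  have hsplit : a / b - c / d = b⁻¹ * (a - c) + b⁻¹ * d⁻¹ * c * (d - b) := by
    field_simp
    ring
  rw [hsplit]
  calc |b⁻¹ * (a - c) + b⁻¹ * d⁻¹ * c * (d - b)|
      ≤ b⁻¹ * |a - c| + b⁻¹ * d⁻¹ * |c| * |b - d| := by
        refine (abs_add_le _ _).trans (le_of_eq ?_)
        rw [abs_mul, abs_mul, abs_mul, abs_mul, abs_sub_comm d, abs_of_pos (inv_pos.2 hb),
          abs_of_pos (inv_pos.2 hd)]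
    _ ≤ k * |a - c| + k ^ 2 * |c| * |b - d| := by
        rw [sq]
        gcongr

lemma abs_real_inner_le_of_norm_le {E : Type*} [NormedAddCommGroup E] [InnerProductSpace ℝ E]
    {x y : E} {r s : ℝ} (hx : ‖x‖ ≤ r) (hy : ‖y‖ ≤ s) : |⟪x, y⟫| ≤ r * s :=
  (abs_real_inner_le_norm x y).trans (mul_le_mul hx hy (norm_nonneg y) ((norm_nonneg x).trans hx))

namespace MeasureTheory

variable {X : Type*} [MeasurableSpace X]

lemma totalVariation_sub_le_of_add_eq {ρ₁ ρ₂ σ₁ σ₂ : Measure X} [IsFiniteMeasure ρ₁]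
    [IsFiniteMeasure ρ₂] [IsFiniteMeasure σ₁] [IsFiniteMeasure σ₂] (h : ρ₁ + σ₂ = ρ₂ + σ₁) :
    (ρ₁.toSignedMeasure - ρ₂.toSignedMeasure).totalVariation ≤ σ₁ + σ₂ := by
  have hsub : ρ₁.toSignedMeasure - ρ₂.toSignedMeasure
      = σ₁.toSignedMeasure - σ₂.toSignedMeasure := by
    rw [sub_eq_sub_iff_add_eq_add, ← Measure.toSignedMeasure_add, ← Measure.toSignedMeasure_add,
      Measure.toSignedMeasure_eq_toSignedMeasure_iff, h, add_comm]
  rw [hsub, SignedMeasure.totalVariation_eq_variation]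
  grw [VectorMeasure.variation_sub_le]
  simp

lemma totalVariation_sub_triangle (s₁ s₂ s₃ : SignedMeasure X) :
    (s₁ - s₃).totalVariation ≤ (s₁ - s₂).totalVariation + (s₂ - s₃).totalVariation := by
  simp only [SignedMeasure.totalVariation_eq_variation, ← sub_add_sub_cancel s₁ s₂ s₃]
  exact VectorMeasure.variation_add_le

lemma add_negPart_eq_add_posPart (μ₁ μ₂ : Measure X) [IsFiniteMeasure μ₁] [IsFiniteMeasure μ₂] :
    μ₁ + (μ₁.toSignedMeasure - μ₂.toSignedMeasure).toJordanDecomposition.negPart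
      = μ₂ + (μ₁.toSignedMeasure - μ₂.toSignedMeasure).toJordanDecomposition.posPart := by
  have hj := (μ₁.toSignedMeasure - μ₂.toSignedMeasure).toSignedMeasure_toJordanDecomposition
  rw [JordanDecomposition.toSignedMeasure, sub_eq_sub_iff_add_eq_add] at hj
  rw [← Measure.toSignedMeasure_eq_toSignedMeasure_iff, Measure.toSignedMeasure_add,
    Measure.toSignedMeasure_add, add_comm μ₂.toSignedMeasure, hj]

lemma withDensity_le_smul {ν : Measure X} {g : X → ℝ≥0∞} {c : ℝ≥0∞} (hgc : ∀ x, g x ≤ c) :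
    ν.withDensity g ≤ c • ν :=
  withDensity_const (μ := ν) c ▸ withDensity_mono (ae_of_all _ hgc)

lemma isFiniteMeasure_withDensity_of_le {ν : Measure X} [IsFiniteMeasure ν] {g : X → ℝ≥0∞}
    {c : ℝ≥0∞} (hc : c ≠ ∞) (hgc : ∀ x, g x ≤ c) : IsFiniteMeasure (ν.withDensity g) :=
  have := ν.smul_finite hc
  isFiniteMeasure_of_le _ (withDensity_le_smul hgc)

lemma totalVariation_withDensity_sub_withDensity_le_smul {μ : Measure X} {g₁ g₂ : X → ℝ≥0∞}
    (hg₁ : Measurable g₁) (hg₂ : Measurable g₂) [IsFiniteMeasure (μ.withDensity g₁)]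
    [IsFiniteMeasure (μ.withDensity g₂)] {c : ℝ≥0∞} (h₁₂ : ∀ x, g₁ x ≤ g₂ x + c)
    (h₂₁ : ∀ x, g₂ x ≤ g₁ x + c) :
    ((μ.withDensity g₁).toSignedMeasure - (μ.withDensity g₂).toSignedMeasure).totalVariation
      ≤ c • μ := by
  have : IsFiniteMeasure (μ.withDensity (g₁ - g₂)) :=
    isFiniteMeasure_of_le _ (withDensity_mono (ae_of_all _ fun x ↦ tsub_le_self))
  have : IsFiniteMeasure (μ.withDensity (g₂ - g₁)) :=
    isFiniteMeasure_of_le _ (withDensity_mono (ae_of_all _ fun x ↦ tsub_le_self))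
  have hbalance : μ.withDensity g₁ + μ.withDensity (g₂ - g₁)
      = μ.withDensity g₂ + μ.withDensity (g₁ - g₂) := by
    rw [← withDensity_add_left hg₁, ← withDensity_add_left hg₂]
    congr 1
    ext x
    simp only [Pi.add_apply, Pi.sub_apply, add_tsub_eq_max, max_comm]
  refine (totalVariation_sub_le_of_add_eq hbalance).trans ?_
  rw [← withDensity_add_left (hg₁.sub hg₂), ← withDensity_const]
  refine withDensity_mono (ae_of_all _ fun x ↦ ?_)
  rcases le_total (g₁ x) (g₂ x) with h | h
  · simpa [tsub_eq_zero_of_le h, add_comm] using h₂₁ x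
  · simpa [tsub_eq_zero_of_le h, add_comm] using h₁₂ x

lemma totalVariation_withDensity_sub_withDensity_le_smul_totalVariation {μ₁ μ₂ : Measure X}
    [IsFiniteMeasure μ₁] [IsFiniteMeasure μ₂] {g : X → ℝ≥0∞} [IsFiniteMeasure (μ₁.withDensity g)]
    [IsFiniteMeasure (μ₂.withDensity g)] {c : ℝ≥0∞} (hc : c ≠ ∞) (hgc : ∀ x, g x ≤ c) :
    ((μ₁.withDensity g).toSignedMeasure - (μ₂.withDensity g).toSignedMeasure).totalVariation
      ≤ c • (μ₁.toSignedMeasure - μ₂.toSignedMeasure).totalVariation := by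
  set p := (μ₁.toSignedMeasure - μ₂.toSignedMeasure).toJordanDecomposition.posPart
  set n := (μ₁.toSignedMeasure - μ₂.toSignedMeasure).toJordanDecomposition.negPart
  have := isFiniteMeasure_withDensity_of_le (ν := p) hc hgc
  have := isFiniteMeasure_withDensity_of_le (ν := n) hc hgc
  have hbalance : μ₁.withDensity g + n.withDensity g = μ₂.withDensity g + p.withDensity g := by
    rw [← withDensity_add_measure, ← withDensity_add_measure, add_negPart_eq_add_posPart]
  refine (totalVariation_sub_le_of_add_eq hbalance).trans ?_
  rw [← withDensity_add_measure]
  exact withDensity_le_smul hgc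

lemma totalVariation_withDensity_ofReal_sub_le {μ₁ μ₂ : Measure X} [IsFiniteMeasure μ₁]
    [IsFiniteMeasure μ₂] {h₁ h₂ : X → ℝ} (hh₁ : Measurable h₁) (hh₂ : Measurable h₂) {δ M : ℝ}
    (hδ : 0 ≤ δ) (hM : 0 ≤ M) (h₁₂ : ∀ x, |h₁ x - h₂ x| ≤ δ) (h₂M : ∀ x, h₂ x ≤ M)
    [IsFiniteMeasure (μ₁.withDensity fun x ↦ ENNReal.ofReal (h₁ x))]
    [IsFiniteMeasure (μ₂.withDensity fun x ↦ ENNReal.ofReal (h₂ x))] :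
    (((μ₁.withDensity fun x ↦ ENNReal.ofReal (h₁ x)).toSignedMeasure
        - (μ₂.withDensity fun x ↦ ENNReal.ofReal (h₂ x)).toSignedMeasure).totalVariation
        univ).toReal
      ≤ δ * μ₁.real univ
        + M * ((μ₁.toSignedMeasure - μ₂.toSignedMeasure).totalVariation univ).toReal := by
  have hg₂M : ∀ x, ENNReal.ofReal (h₂ x) ≤ ENNReal.ofReal M :=
    fun x ↦ ENNReal.ofReal_le_ofReal (h₂M x)
  have := isFiniteMeasure_withDensity_of_le (ν := μ₁) ENNReal.ofReal_ne_top hg₂M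
  have hofReal : ∀ {a b : ℝ}, a ≤ b + δ →
      ENNReal.ofReal a ≤ ENNReal.ofReal b + ENNReal.ofReal δ :=
    fun h ↦ (ENNReal.ofReal_le_ofReal h).trans ENNReal.ofReal_add_le
  have hdensity := totalVariation_withDensity_sub_withDensity_le_smul (μ := μ₁)
    hh₁.ennreal_ofReal hh₂.ennreal_ofReal
    (fun x ↦ hofReal (by linarith [(abs_le.1 (h₁₂ x)).2]))
    (fun x ↦ hofReal (by linarith [(abs_le.1 (h₁₂ x)).1]))
  have hbase := totalVariation_withDensity_sub_withDensity_le_smul_totalVariation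
    (μ₁ := μ₁) (μ₂ := μ₂) ENNReal.ofReal_ne_top hg₂M
  have hsum := (totalVariation_sub_triangle _
    (μ₁.withDensity fun x ↦ ENNReal.ofReal (h₂ x)).toSignedMeasure _ univ).trans
    (add_le_add (hdensity univ) (hbase univ))
  rw [Measure.smul_apply, Measure.smul_apply, smul_eq_mul, smul_eq_mul] at hsum
  calc _ ≤ (ENNReal.ofReal δ * μ₁ univ + ENNReal.ofReal M
          * (μ₁.toSignedMeasure - μ₂.toSignedMeasure).totalVariation univ).toReal :=
        ENNReal.toReal_mono (by finiteness) hsum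
    _ = _ := by
        rw [ENNReal.toReal_add (by finiteness) (by finiteness), ENNReal.toReal_mul,
          ENNReal.toReal_mul, ENNReal.toReal_ofReal hδ, ENNReal.toReal_ofReal hM, measureReal_def]

lemma abs_measureReal_sub_le_totalVariation (ρ₁ ρ₂ : Measure X) [IsFiniteMeasure ρ₁]
    [IsFiniteMeasure ρ₂] {s : Set X} (hs : MeasurableSet s) :
    |ρ₁.real s - ρ₂.real s|
      ≤ ((ρ₁.toSignedMeasure - ρ₂.toSignedMeasure).totalVariation s).toReal := by
  simpa [Measure.toSignedMeasure_sub_apply hs, measureReal_def] using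
    SignedMeasure.norm_le_totalVariation (ρ₁.toSignedMeasure - ρ₂.toSignedMeasure) s

lemma integral_eq_measureReal_withDensity_ofReal {μ : Measure X} {f : X → ℝ} (hf : 0 ≤ f)
    (hfm : AEStronglyMeasurable f μ) :
    ∫ x, f x ∂μ = (μ.withDensity fun x ↦ ENNReal.ofReal (f x)).real univ := by
  rw [integral_eq_lintegral_of_nonneg_ae (ae_of_all _ hf) hfm, measureReal_def,
    withDensity_apply _ MeasurableSet.univ, Measure.restrict_univ]

variable {μ : Measure X} {φ : X → ℝ} {R : ℝ}

lemma integrable_exp_of_abs_le [IsFiniteMeasure μ] (hφ : Measurable φ) (hR : ∀ x, |φ x| ≤ R) :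
    Integrable (fun x ↦ exp (φ x)) μ :=
  .of_bound hφ.exp.aestronglyMeasurable (exp R) (ae_of_all _ fun x ↦ by
    rw [norm_of_nonneg (exp_pos _).le]
    exact exp_le_exp.2 (le_of_abs_le (hR x)))

lemma inv_integral_exp_le [IsProbabilityMeasure μ] (hφ : Measurable φ) (hR : ∀ x, |φ x| ≤ R) :
    (∫ x, exp (φ x) ∂μ)⁻¹ ≤ exp R := by
  have hlo : exp (-R) ≤ ∫ x, exp (φ x) ∂μ := by
    simpa using integral_mono (integrable_const _) (integrable_exp_of_abs_le (μ := μ) hφ hR)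
      fun x ↦ exp_le_exp.2 (neg_le_of_abs_le (hR x))
  simpa [exp_neg] using inv_anti₀ (exp_pos _) hlo

lemma abs_integral_exp_sub_integral_exp_le {μ₁ μ₂ : Measure X} [IsProbabilityMeasure μ₁]
    [IsProbabilityMeasure μ₂] {φ₁ φ₂ : X → ℝ} (hφ₁ : Measurable φ₁) (hφ₂ : Measurable φ₂)
    {ε : ℝ} (hR₁ : ∀ x, |φ₁ x| ≤ R) (hR₂ : ∀ x, |φ₂ x| ≤ R) (hε : ∀ x, |φ₁ x - φ₂ x| ≤ ε) :
    |∫ x, exp (φ₁ x) ∂μ₁ - ∫ x, exp (φ₂ x) ∂μ₂|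
      ≤ exp R * (ε + ((μ₁.toSignedMeasure - μ₂.toSignedMeasure).totalVariation univ).toReal) := by
  obtain ⟨x₀⟩ := nonempty_of_isProbabilityMeasure μ₁
  have := isFiniteMeasure_withDensity_ofReal (integrable_exp_of_abs_le (μ := μ₁) hφ₁ hR₁).2
  have := isFiniteMeasure_withDensity_ofReal (integrable_exp_of_abs_le (μ := μ₂) hφ₂ hR₂).2
  rw [integral_eq_measureReal_withDensity_ofReal (μ := μ₁) (fun x ↦ (exp_pos _).le)
      hφ₁.exp.aestronglyMeasurable,
    integral_eq_measureReal_withDensity_ofReal (μ := μ₂) (fun x ↦ (exp_pos _).le)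
      hφ₂.exp.aestronglyMeasurable, mul_add]
  refine (abs_measureReal_sub_le_totalVariation _ _ MeasurableSet.univ).trans ?_
  simpa using totalVariation_withDensity_ofReal_sub_le (μ₁ := μ₁) (μ₂ := μ₂) hφ₁.exp hφ₂.exp
    (mul_nonneg (exp_pos R).le ((abs_nonneg _).trans (hε x₀))) (exp_pos R).le
    (fun x ↦ (abs_exp_sub_exp_le (le_of_abs_le (hR₁ x)) (le_of_abs_le (hR₂ x))).trans
      (mul_le_mul_of_nonneg_left (hε x) (exp_pos R).le))
    (fun x ↦ exp_le_exp.2 (le_of_abs_le (hR₂ x)))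

theorem totalVariation_tilted_sub_tilted_le {μ₁ μ₂ : Measure X} [IsProbabilityMeasure μ₁]
    [IsProbabilityMeasure μ₂] {φ₁ φ₂ : X → ℝ} (hφ₁ : Measurable φ₁) (hφ₂ : Measurable φ₂) {ε : ℝ}
    (hR₁ : ∀ x, |φ₁ x| ≤ R) (hR₂ : ∀ x, |φ₂ x| ≤ R) (hε : ∀ x, |φ₁ x - φ₂ x| ≤ ε) :
    (((μ₁.tilted φ₁).toSignedMeasure - (μ₂.tilted φ₂).toSignedMeasure).totalVariation
        univ).toReal
      ≤ (exp R ^ 2 + exp R ^ 4)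
        * (ε + ((μ₁.toSignedMeasure - μ₂.toSignedMeasure).totalVariation univ).toReal) := by
  obtain ⟨x₀⟩ := nonempty_of_isProbabilityMeasure μ₁
  set T := ((μ₁.toSignedMeasure - μ₂.toSignedMeasure).totalVariation univ).toReal
  set K := exp R
  set Z₁ := ∫ x, exp (φ₁ x) ∂μ₁
  set Z₂ := ∫ x, exp (φ₂ x) ∂μ₂
  have hε₀ : 0 ≤ ε := (abs_nonneg _).trans (hε x₀)
  have hT₀ : 0 ≤ T := ENNReal.toReal_nonneg
  have hK₀ : 0 < K := exp_pos R
  have hZ₁ : 0 < Z₁ := integral_exp_pos (integrable_exp_of_abs_le hφ₁ hR₁)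
  have hZ₂ : 0 < Z₂ := integral_exp_pos (integrable_exp_of_abs_le hφ₂ hR₂)
  have hZ₂K : Z₂⁻¹ ≤ K := inv_integral_exp_le hφ₂ hR₂
  have hexp_le : ∀ x, exp (φ₂ x) ≤ K := fun x ↦ exp_le_exp.2 (le_of_abs_le (hR₂ x))
  have hdensity : ∀ x, |exp (φ₁ x) / Z₁ - exp (φ₂ x) / Z₂| ≤ K ^ 2 * ε + K ^ 4 * (ε + T) := by
    intro x
    refine (abs_div_sub_div_le hZ₁ hZ₂ (inv_integral_exp_le hφ₁ hR₁) hZ₂K).trans ?_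
    rw [abs_of_pos (exp_pos (φ₂ x))]
    calc K * |exp (φ₁ x) - exp (φ₂ x)| + K ^ 2 * exp (φ₂ x) * |Z₁ - Z₂|
        ≤ K * (K * ε) + K ^ 2 * K * (K * (ε + T)) := by
          gcongr
          · exact (abs_exp_sub_exp_le (le_of_abs_le (hR₁ x)) (le_of_abs_le (hR₂ x))).trans
              (mul_le_mul_of_nonneg_left (hε x) hK₀.le)
          · exact hexp_le x
          · exact abs_integral_exp_sub_integral_exp_le hφ₁ hφ₂ hR₁ hR₂ hε
      _ = K ^ 2 * ε + K ^ 4 * (ε + T) := by ring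
  have hdensity_le : ∀ x, exp (φ₂ x) / Z₂ ≤ K ^ 2 := fun x ↦ by
    rw [div_eq_mul_inv, sq]
    exact mul_le_mul (hexp_le x) hZ₂K (inv_pos.2 hZ₂).le hK₀.le
  have : IsFiniteMeasure (μ₁.withDensity fun x ↦ ENNReal.ofReal (exp (φ₁ x) / Z₁)) :=
    inferInstanceAs (IsFiniteMeasure (μ₁.tilted φ₁))
  have : IsFiniteMeasure (μ₂.withDensity fun x ↦ ENNReal.ofReal (exp (φ₂ x) / Z₂)) :=
    inferInstanceAs (IsFiniteMeasure (μ₂.tilted φ₂))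
  refine (totalVariation_withDensity_ofReal_sub_le (hφ₁.exp.div_const Z₁) (hφ₂.exp.div_const Z₂)
    (by positivity) (by positivity) hdensity hdensity_le).trans (le_of_eq ?_)
  rw [probReal_univ]
  ring

lemma Measure.tilted_eq_withDensity_exp_sub_log (μ : Measure X) (φ : X → ℝ)
    (hZ : 0 < ∫ x, exp (φ x) ∂μ) :
    μ.tilted φ = μ.withDensity fun x ↦ ENNReal.ofReal (exp (φ x - log (∫ y, exp (φ y) ∂μ))) := by
  simp only [Measure.tilted, exp_sub, exp_log hZ]

end MeasureTheory

theorem expFamily_lipschitz_general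
    {X : Type*} [MeasurableSpace X] {L : ℕ}
    (f : X → EuclideanSpace ℝ (Fin L)) (hf_meas : Measurable f)
    (B : ℝ) (hB : 0 ≤ B) (hf_bdd : ∀ x, ‖f x‖ ≤ B)
    (Λ : ℝ) :
    ∃ C : ℝ, 0 < C ∧
      ∀ (l₁ l₂ : EuclideanSpace ℝ (Fin L)), ‖l₁‖ ≤ Λ → ‖l₂‖ ≤ Λ →
      ∀ (μ₁ μ₂ : Measure X), ∀ (_ : IsProbabilityMeasure μ₁) (_ : IsProbabilityMeasure μ₂),
      ∀ (ν₁ ν₂ : Measure X), ∀ (_ : IsFiniteMeasure ν₁) (_ : IsFiniteMeasure ν₂),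
        ν₁ = μ₁.withDensity (fun x => ENNReal.ofReal (Real.exp
              (⟪l₁, f x⟫ - Real.log (∫ y, Real.exp ⟪l₁, f y⟫ ∂μ₁)))) →
        ν₂ = μ₂.withDensity (fun x => ENNReal.ofReal (Real.exp
              (⟪l₂, f x⟫ - Real.log (∫ y, Real.exp ⟪l₂, f y⟫ ∂μ₂)))) →
        ((ν₁.toSignedMeasure - ν₂.toSignedMeasure).totalVariation Set.univ).toReal
          ≤ C * (‖l₁ - l₂‖ +
              ((μ₁.toSignedMeasure - μ₂.toSignedMeasure).totalVariation Set.univ).toReal) := by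
  refine ⟨(exp (Λ * B) ^ 2 + exp (Λ * B) ^ 4) * (B + 1), by positivity, ?_⟩
  intro l₁ l₂ hl₁ hl₂ μ₁ μ₂ _ _ ν₁ ν₂ _ _ hν₁ hν₂
  have hmeas : ∀ l : EuclideanSpace ℝ (Fin L), Measurable fun x ↦ ⟪l, f x⟫ :=
    fun l ↦ measurable_const.inner hf_meas
  have hbound : ∀ l : EuclideanSpace ℝ (Fin L), ‖l‖ ≤ Λ → ∀ x, |⟪l, f x⟫| ≤ Λ * B :=
    fun l hl x ↦ abs_real_inner_le_of_norm_le hl (hf_bdd x)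
  have htilted : ∀ (μ : Measure X) [IsProbabilityMeasure μ] l, ‖l‖ ≤ Λ →
      μ.withDensity (fun x ↦ ENNReal.ofReal (exp (⟪l, f x⟫ - log (∫ y, exp ⟪l, f y⟫ ∂μ))))
        = μ.tilted fun x ↦ ⟪l, f x⟫ := fun μ _ l hl ↦
    (μ.tilted_eq_withDensity_exp_sub_log _
      (integral_exp_pos (integrable_exp_of_abs_le (hmeas l) (hbound l hl)))).symm
  rw [htilted μ₁ l₁ hl₁] at hν₁
  rw [htilted μ₂ l₂ hl₂] at hν₂
  subst hν₁ hν₂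
  have hε : ∀ x, |⟪l₁, f x⟫ - ⟪l₂, f x⟫| ≤ ‖l₁ - l₂‖ * B := fun x ↦ by
    simpa only [inner_sub_left] using abs_real_inner_le_of_norm_le (x := l₁ - l₂) le_rfl (hf_bdd x)
  refine (totalVariation_tilted_sub_tilted_le (hmeas l₁) (hmeas l₂) (hbound l₁ hl₁)
    (hbound l₂ hl₂) hε).trans ?_
  have hT : 0 ≤ ((μ₁.toSignedMeasure - μ₂.toSignedMeasure).totalVariation univ).toReal :=
    ENNReal.toReal_nonneg
  rw [mul_assoc]
  gcongr
  nlinarith [norm_nonneg (l₁ - l₂)]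

/-- For every Λ > 0 there is a constant C (depending only on Λ and the
bound ‖f‖_∞ on f) such that for ‖λᵢ‖ ≤ Λ and probability measures μ₁, μ₂, the
exponential family members ν_i = E(λ_i, μ_i) = μ_i.withDensity (exp(⟪λ_i, f⟫ − A(λ_i, μ_i)))
satisfy ‖ν₁ − ν₂‖_TV ≤ C (‖λ₁ − λ₂‖ + ‖μ₁ − μ₂‖_TV), with ‖μ − ν‖_TV = |μ − ν|(X). -/
theorem expFamily_lipschitz
    {X : Type*} [MeasurableSpace X] {L : ℕ} (hL : 0 < L)
    (f : X → EuclideanSpace ℝ (Fin L)) (hf_meas : Measurable f)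
    (B : ℝ) (hB : 0 ≤ B) (hf_bdd : ∀ x, ‖f x‖ ≤ B)
    (Λ : ℝ) (hΛ : 0 < Λ) :
    ∃ C : ℝ, 0 < C ∧
      ∀ (l₁ l₂ : EuclideanSpace ℝ (Fin L)), ‖l₁‖ ≤ Λ → ‖l₂‖ ≤ Λ →
      ∀ (μ₁ μ₂ : Measure X), ∀ (_ : IsProbabilityMeasure μ₁) (_ : IsProbabilityMeasure μ₂),
      ∀ (ν₁ ν₂ : Measure X), ∀ (_ : IsFiniteMeasure ν₁) (_ : IsFiniteMeasure ν₂),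
        ν₁ = μ₁.withDensity (fun x => ENNReal.ofReal (Real.exp
              (⟪l₁, f x⟫ - Real.log (∫ y, Real.exp ⟪l₁, f y⟫ ∂μ₁)))) →
        ν₂ = μ₂.withDensity (fun x => ENNReal.ofReal (Real.exp
              (⟪l₂, f x⟫ - Real.log (∫ y, Real.exp ⟪l₂, f y⟫ ∂μ₂)))) →
        ((ν₁.toSignedMeasure - ν₂.toSignedMeasure).totalVariation Set.univ).toReal
          ≤ C * (‖l₁ - l₂‖ +
              ((μ₁.toSignedMeasure - μ₂.toSignedMeasure).totalVariation Set.univ).toReal) :=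
  expFamily_lipschitz_general f hf_meas B hB hf_bdd Λ
end

section
/- Let E be a real normed space, C ⊆ E a convex subset, h_0 > 0 and C_Lip ≥ 0. Let F : [0, h_0] × C → E satisfy F(0, μ) = μ for every μ ∈ C. Suppose there are maps D_1, D_2 : [0, h_0] × C × E → E such that for all μ, ν ∈ C, writing η = ν − μ and μ_β = μ + βη for β ∈ [0,1]: (a) for every h ∈ [0, h_0] and β ∈ [0,1), (F(h, μ_β + εη) − F(h, μ_β))/ε → D_1(h, μ_β, η) as ε → 0⁺; (b) for every β, the map h ↦ D_1(h, μ_β, η) is differentiable on [0, h_0] with derivative D_2(h, μ_β, η); (c) ‖D_2(h, μ_β, η)‖ ≤ C_Lip ‖η‖ for all h ∈ [0, h_0] and β ∈ [0,1]; (d) for every h, the map β ↦ F(h, μ_β) is continuous on [0,1]. Then for all h ∈ [0, h_0] and all μ, ν ∈ C, ‖F(h, ν) − F(h, μ)‖ ≤ (1 + C_Lip · h) ‖ν − μ‖. -/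
open Filter Set Topology

/-! Write `η = ν - μ` and `g β = F h (μ + β • η)`. Hypothesis (a) says that `D₁ h (μ + β • η) η`
is the right derivative of `g` at `β`. For `h = 0` the map `g` is the affine segment itself, so
`D₁ 0 (μ + β • η) η = η`; the mean value inequality in `h`, with the bound (c) on `D₂`, gives
`‖D₁ h (μ + β • η) η‖ ≤ (1 + CLip * h) * ‖η‖`, and the mean value inequality for right derivatives
of `g` on `[0, 1]` bounds `‖g 1 - g 0‖` by the same quantity. -/

theorem hasDerivWithinAt_Ici_iff_tendsto_slope_zero_right {F : Type*} [NormedAddCommGroup F]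
    [NormedSpace ℝ F] {f : ℝ → F} {f' : F} {x : ℝ} :
    HasDerivWithinAt f f' (Ici x) x ↔
      Tendsto (fun t ↦ t⁻¹ • (f (x + t) - f x)) (𝓝[>] 0) (𝓝 f') := by
  have : 𝓝[>] x = map (x + ·) (𝓝[>] 0) := by simp
  rw [hasDerivWithinAt_iff_tendsto_slope, Ici_sdiff_left, this, tendsto_map'_iff]
  simp [slope, Function.comp_def]

theorem Convex.hasDerivWithinAt_Ici_of_eqOn_id {E : Type*} [NormedAddCommGroup E]
    [NormedSpace ℝ E] {C : Set E} (hC : Convex ℝ C) {f : E → E} (hf : ∀ x ∈ C, f x = x)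
    {μ ν : E} (hμ : μ ∈ C) (hν : ν ∈ C) {β : ℝ} (hβ : β ∈ Ico (0 : ℝ) 1) :
    HasDerivWithinAt (fun t : ℝ ↦ f (μ + t • (ν - μ))) (ν - μ) (Ici β) β := by
  have hline : HasDerivWithinAt (fun t : ℝ ↦ μ + t • (ν - μ)) (ν - μ) (Ici β) β := by
    simpa using (((hasDerivAt_id β).smul_const (ν - μ)).const_add μ).hasDerivWithinAt
  have hmem : ∀ t ∈ Icc (0 : ℝ) 1, f (μ + t • (ν - μ)) = μ + t • (ν - μ) :=
    fun t ht ↦ hf _ (hC.add_smul_sub_mem hμ hν ht)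
  refine hline.congr_of_eventuallyEq ?_ (hmem β (Ico_subset_Icc_self hβ))
  filter_upwards [Icc_mem_nhdsGE_of_mem hβ] using hmem

theorem abstract_lipschitz_stability_general
    {E : Type*} [NormedAddCommGroup E] [NormedSpace ℝ E]
    (C : Set E) (hC : Convex ℝ C)
    (h₀ : ℝ)
    (CLip : ℝ)
    (F : ℝ → E → E)
    (D₁ D₂ : ℝ → E → E → E)
    (hF0 : ∀ μ ∈ C, F 0 μ = μ)
    (ha : ∀ μ ∈ C, ∀ ν ∈ C, ∀ h ∈ Set.Icc (0 : ℝ) h₀, ∀ β ∈ Set.Ico (0 : ℝ) 1,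
      Tendsto (fun ε : ℝ =>
          ε⁻¹ • (F h (μ + β • (ν - μ) + ε • (ν - μ)) - F h (μ + β • (ν - μ))))
        (nhdsWithin 0 (Set.Ioi 0))
        (nhds (D₁ h (μ + β • (ν - μ)) (ν - μ))))
    (hb : ∀ μ ∈ C, ∀ ν ∈ C, ∀ β ∈ Set.Icc (0 : ℝ) 1, ∀ h ∈ Set.Icc (0 : ℝ) h₀,
      HasDerivWithinAt (fun h' => D₁ h' (μ + β • (ν - μ)) (ν - μ))
        (D₂ h (μ + β • (ν - μ)) (ν - μ)) (Set.Icc (0 : ℝ) h₀) h)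
    (hc : ∀ μ ∈ C, ∀ ν ∈ C, ∀ h ∈ Set.Icc (0 : ℝ) h₀, ∀ β ∈ Set.Icc (0 : ℝ) 1,
      ‖D₂ h (μ + β • (ν - μ)) (ν - μ)‖ ≤ CLip * ‖ν - μ‖)
    (hd : ∀ μ ∈ C, ∀ ν ∈ C, ∀ h ∈ Set.Icc (0 : ℝ) h₀,
      ContinuousOn (fun β : ℝ => F h (μ + β • (ν - μ))) (Set.Icc (0 : ℝ) 1)) :
    ∀ h ∈ Set.Icc (0 : ℝ) h₀, ∀ μ ∈ C, ∀ ν ∈ C,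
      ‖F h ν - F h μ‖ ≤ (1 + CLip * h) * ‖ν - μ‖ := by
  intro h hh μ hμ ν hν
  have hline : ∀ h' ∈ Icc (0 : ℝ) h₀, ∀ β ∈ Ico (0 : ℝ) 1,
      HasDerivWithinAt (fun t : ℝ ↦ F h' (μ + t • (ν - μ)))
        (D₁ h' (μ + β • (ν - μ)) (ν - μ)) (Ici β) β := fun h' hh' β hβ ↦ by
    rw [hasDerivWithinAt_Ici_iff_tendsto_slope_zero_right]
    simpa only [add_smul, add_assoc] using ha μ hμ ν hν h' hh' β hβ
  have hD₁_zero : ∀ β ∈ Ico (0 : ℝ) 1, D₁ 0 (μ + β • (ν - μ)) (ν - μ) = ν - μ :=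
    fun β hβ ↦ (uniqueDiffWithinAt_Ici β).eq_deriv _
      (hline 0 ⟨le_rfl, hh.1.trans hh.2⟩ β hβ) (hC.hasDerivWithinAt_Ici_of_eqOn_id hF0 hμ hν hβ)
  have hD₁_bound : ∀ β ∈ Ico (0 : ℝ) 1,
      ‖D₁ h (μ + β • (ν - μ)) (ν - μ)‖ ≤ (1 + CLip * h) * ‖ν - μ‖ := by
    intro β hβ
    have hβ' := Ico_subset_Icc_self hβ
    have hgrowth := norm_image_sub_le_of_norm_deriv_le_segment' (hb μ hμ ν hν β hβ')
      (fun x hx ↦ hc μ hμ ν hν x (Ico_subset_Icc_self hx) β hβ') h hh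
    rw [hD₁_zero β hβ] at hgrowth
    linarith [norm_le_norm_add_norm_sub' (D₁ h (μ + β • (ν - μ)) (ν - μ)) (ν - μ)]
  simpa using norm_image_sub_le_of_norm_deriv_right_le_segment (hd μ hμ ν hν h hh)
    (hline h hh) hD₁_bound 1 (right_mem_Icc.2 zero_le_one)

/-- Abstract numerical-stability (Lipschitz) lemma. Let E be a real
normed space, C ⊆ E convex, h₀ > 0, C_Lip ≥ 0, and F : [0, h₀] × C → E with
F(0, μ) = μ. Suppose D₁ is the one-sided directional derivative of F(h, ·) along
segments of C (hypothesis (a)), h ↦ D₁(h, μ_β, η) is differentiable on [0, h₀] with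
derivative D₂ (b), ‖D₂(h, μ_β, η)‖ ≤ C_Lip ‖η‖ (c), and β ↦ F(h, μ_β) is continuous
on [0,1] (d). Then ‖F(h, ν) − F(h, μ)‖ ≤ (1 + C_Lip·h) ‖ν − μ‖ for all h ∈ [0, h₀]
and μ, ν ∈ C. -/
theorem abstract_lipschitz_stability
    {E : Type*} [NormedAddCommGroup E] [NormedSpace ℝ E]
    (C : Set E) (hC : Convex ℝ C)
    (h₀ : ℝ) (hh₀ : 0 < h₀)
    (CLip : ℝ) (hCLip : 0 ≤ CLip)
    (F : ℝ → E → E)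
    (D₁ D₂ : ℝ → E → E → E)
    (hF0 : ∀ μ ∈ C, F 0 μ = μ)
    (ha : ∀ μ ∈ C, ∀ ν ∈ C, ∀ h ∈ Set.Icc (0 : ℝ) h₀, ∀ β ∈ Set.Ico (0 : ℝ) 1,
      Tendsto (fun ε : ℝ =>
          ε⁻¹ • (F h (μ + β • (ν - μ) + ε • (ν - μ)) - F h (μ + β • (ν - μ))))
        (nhdsWithin 0 (Set.Ioi 0))
        (nhds (D₁ h (μ + β • (ν - μ)) (ν - μ))))
    (hb : ∀ μ ∈ C, ∀ ν ∈ C, ∀ β ∈ Set.Icc (0 : ℝ) 1, ∀ h ∈ Set.Icc (0 : ℝ) h₀,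
      HasDerivWithinAt (fun h' => D₁ h' (μ + β • (ν - μ)) (ν - μ))
        (D₂ h (μ + β • (ν - μ)) (ν - μ)) (Set.Icc (0 : ℝ) h₀) h)
    (hc : ∀ μ ∈ C, ∀ ν ∈ C, ∀ h ∈ Set.Icc (0 : ℝ) h₀, ∀ β ∈ Set.Icc (0 : ℝ) 1,
      ‖D₂ h (μ + β • (ν - μ)) (ν - μ)‖ ≤ CLip * ‖ν - μ‖)
    (hd : ∀ μ ∈ C, ∀ ν ∈ C, ∀ h ∈ Set.Icc (0 : ℝ) h₀,
      ContinuousOn (fun β : ℝ => F h (μ + β • (ν - μ))) (Set.Icc (0 : ℝ) 1)) :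
    ∀ h ∈ Set.Icc (0 : ℝ) h₀, ∀ μ ∈ C, ∀ ν ∈ C,
      ‖F h ν - F h μ‖ ≤ (1 + CLip * h) * ‖ν - μ‖ :=
  abstract_lipschitz_stability_general C hC h₀ CLip F D₁ D₂ hF0 ha hb hc hd
end

section
/- Let d ∈ ℕ, T > 0 and c, C > 1. Let p_0 : ℝ^d → ℝ satisfy C^{-1} exp(−c|x|²) ≤ p_0(x) ≤ C exp(−|x|²/c) for all x ∈ ℝ^d, and let p : (0, T] × ℝ^d × ℝ^d → ℝ be a nonnegative measurable kernel satisfying the Gaussian (Aronson) bounds C^{-1} t^{-d/2} exp(−c|x−ξ|²/t) ≤ p(t, x; ξ) ≤ C t^{-d/2} exp(−|x−ξ|²/(c t)) for all t ∈ (0, T] and x, ξ ∈ ℝ^d. Then there exists a constant C' > 1, depending only on c, C and d, such that for all t ∈ (0, T] and x ∈ ℝ^d, (C')^{-1} (1 + 2t)^{-d/2} exp(−2c|x|²) ≤ ∫_{ℝ^d} p(t, x; ξ) p_0(ξ) dξ ≤ C' exp(−|x|²/(c(1 + 2t))). -/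
/-!
Multiplying the two-sided bounds on `p` and `p₀`, the integrand `ξ ↦ p(t, x; ξ) p₀(ξ)` lies
between `C^∓2 t^(-d/2) exp(-(γ/t)|x - ξ|² - γ|ξ|²)` with `γ = c` and `γ = 1/c` respectively.
Completing the square in `ξ` evaluates these Gaussian convolutions exactly:
`t^(-d/2) ∫ exp(-(γ/t)|x - ξ|² - γ|ξ|²) dξ = (π / (γ(1 + t)))^(d/2) exp(-γ|x|² / (1 + t))`,
and elementary comparisons in `t` turn the two values into the claimed profiles. Since `π > 1`,
the constant `C' = C² (πc)^(d/2)` serves for both bounds.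
-/

open MeasureTheory Real Module

lemma integral_mem_Icc_of_le_of_le {α : Type*} [MeasurableSpace α] {μ : Measure α}
    {f g₁ g₂ : α → ℝ} (hf : AEStronglyMeasurable f μ) (h₁ : ∀ a, g₁ a ≤ f a)
    (h₂ : ∀ a, f a ≤ g₂ a) (hg₁ : Integrable g₁ μ) (hg₂ : Integrable g₂ μ) :
    ∫ a, f a ∂μ ∈ Set.Icc (∫ a, g₁ a ∂μ) (∫ a, g₂ a ∂μ) := by
  have hfi := integrable_of_le_of_le hf (.of_forall h₁) (.of_forall h₂) hg₁ hg₂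
  exact ⟨integral_mono hg₁ hfi h₁, integral_mono hfi hg₂ h₂⟩

section GaussianProduct

variable {V : Type*} [NormedAddCommGroup V] [InnerProductSpace ℝ V]

lemma exp_neg_mul_norm_sub_sq_add_mul_norm_sq {a b : ℝ} (hab : a + b ≠ 0) (x ξ : V) :
    exp (-(a * ‖x - ξ‖ ^ 2 + b * ‖ξ‖ ^ 2))
      = exp (-(a + b) * ‖ξ - (a / (a + b)) • x‖ ^ 2) * exp (-(a * b / (a + b)) * ‖x‖ ^ 2) := by
  rw [← exp_add, norm_sub_sq_real, norm_sub_sq_real, real_inner_smul_right, norm_smul,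
    real_inner_comm, mul_pow, Real.norm_eq_abs, sq_abs]
  congr 1
  field_simp
  ring

variable [FiniteDimensional ℝ V] [MeasurableSpace V] [BorelSpace V]

lemma integrable_exp_neg_mul_sq_norm {b : ℝ} (hb : 0 < b) :
    Integrable (fun v : V ↦ exp (-b * ‖v‖ ^ 2)) :=
  Integrable.of_integral_ne_zero <| by
    rw [GaussianFourier.integral_rexp_neg_mul_sq_norm hb]
    positivity

lemma integrable_exp_neg_mul_norm_sub_sq_add_mul_norm_sq {a b : ℝ} (ha : 0 < a) (hb : 0 < b)
    (x : V) : Integrable (fun ξ : V ↦ exp (-(a * ‖x - ξ‖ ^ 2 + b * ‖ξ‖ ^ 2))) := by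
  simp_rw [exp_neg_mul_norm_sub_sq_add_mul_norm_sq (add_pos ha hb).ne' x]
  exact ((integrable_exp_neg_mul_sq_norm (add_pos ha hb)).comp_sub_right _).mul_const _

lemma integral_exp_neg_mul_norm_sub_sq_add_mul_norm_sq {a b : ℝ} (hab : 0 < a + b) (x : V) :
    ∫ ξ : V, exp (-(a * ‖x - ξ‖ ^ 2 + b * ‖ξ‖ ^ 2))
      = (π / (a + b)) ^ ((finrank ℝ V : ℝ) / 2) * exp (-(a * b / (a + b)) * ‖x‖ ^ 2) := by
  simp_rw [exp_neg_mul_norm_sub_sq_add_mul_norm_sq hab.ne' x]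
  rw [integral_mul_const, integral_sub_right_eq_self (fun v : V ↦ exp (-(a + b) * ‖v‖ ^ 2)),
    GaussianFourier.integral_rexp_neg_mul_sq_norm hab]

lemma rpow_neg_mul_integral_exp_neg_div_mul_norm_sub_sq_add {γ t : ℝ} (hγ : 0 < γ) (ht : 0 < t)
    (x : V) :
    t ^ (-((finrank ℝ V : ℝ) / 2)) * ∫ ξ : V, exp (-(γ / t * ‖x - ξ‖ ^ 2 + γ * ‖ξ‖ ^ 2))
      = (π / (γ * (1 + t))) ^ ((finrank ℝ V : ℝ) / 2) * exp (-(γ / (1 + t)) * ‖x‖ ^ 2) := by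
  have h1t : 0 < 1 + t := by linarith
  rw [integral_exp_neg_mul_norm_sub_sq_add_mul_norm_sq (by positivity) x, ← mul_assoc,
    rpow_neg ht.le, ← inv_rpow ht.le, ← mul_rpow (by positivity) (by positivity)]
  congr 2 <;> field_simp

lemma integral_mul_mem_Icc_of_gaussian_bounds {c C t : ℝ} (hc : 0 < c) (hC : 0 < C) (ht : 0 < t)
    {k g : V → ℝ} (hk_meas : Measurable k) (hg_meas : Measurable g) (x : V)
    (hk : ∀ ξ, C⁻¹ * t ^ (-(finrank ℝ V : ℝ) / 2) * exp (-c * ‖x - ξ‖ ^ 2 / t) ≤ k ξ ∧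
      k ξ ≤ C * t ^ (-(finrank ℝ V : ℝ) / 2) * exp (-‖x - ξ‖ ^ 2 / (c * t)))
    (hg : ∀ ξ, C⁻¹ * exp (-c * ‖ξ‖ ^ 2) ≤ g ξ ∧ g ξ ≤ C * exp (-‖ξ‖ ^ 2 / c)) :
    ∫ ξ, k ξ * g ξ ∈ Set.Icc
      (C⁻¹ ^ 2 * ((π / (c * (1 + t))) ^ ((finrank ℝ V : ℝ) / 2) * exp (-(c / (1 + t)) * ‖x‖ ^ 2)))
      (C ^ 2 * ((π / (c⁻¹ * (1 + t))) ^ ((finrank ℝ V : ℝ) / 2) *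
        exp (-(c⁻¹ / (1 + t)) * ‖x‖ ^ 2))) := by
  have hlo : ∀ ξ, C⁻¹ ^ 2 * (t ^ (-((finrank ℝ V : ℝ) / 2)) *
      exp (-(c / t * ‖x - ξ‖ ^ 2 + c * ‖ξ‖ ^ 2))) ≤ k ξ * g ξ := fun ξ ↦
    calc _ = C⁻¹ * t ^ (-(finrank ℝ V : ℝ) / 2) * exp (-c * ‖x - ξ‖ ^ 2 / t)
          * (C⁻¹ * exp (-c * ‖ξ‖ ^ 2)) := by
          rw [neg_div, neg_add, exp_add]; ring_nf
      _ ≤ _ := mul_le_mul (hk ξ).1 (hg ξ).1 (by positivity)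
          ((by positivity : (0 : ℝ) ≤ _).trans (hk ξ).1)
  have hup : ∀ ξ, k ξ * g ξ ≤ C ^ 2 * (t ^ (-((finrank ℝ V : ℝ) / 2)) *
      exp (-(c⁻¹ / t * ‖x - ξ‖ ^ 2 + c⁻¹ * ‖ξ‖ ^ 2))) := fun ξ ↦
    calc _ ≤ C * t ^ (-(finrank ℝ V : ℝ) / 2) * exp (-‖x - ξ‖ ^ 2 / (c * t))
          * (C * exp (-‖ξ‖ ^ 2 / c)) :=
          mul_le_mul (hk ξ).2 (hg ξ).2 ((by positivity : (0 : ℝ) ≤ _).trans (hg ξ).1)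
            (by positivity)
      _ = _ := by rw [neg_div, neg_add, exp_add]; ring_nf
  have h := integral_mem_Icc_of_le_of_le (hk_meas.mul hg_meas).aestronglyMeasurable hlo hup
    (((integrable_exp_neg_mul_norm_sub_sq_add_mul_norm_sq (by positivity) hc x).const_mul _
      ).const_mul _)
    (((integrable_exp_neg_mul_norm_sub_sq_add_mul_norm_sq (by positivity) (by positivity) x
      ).const_mul _).const_mul _)
  simpa only [Pi.mul_apply, integral_const_mul,
    rpow_neg_mul_integral_exp_neg_div_mul_norm_sub_sq_add hc ht,
    rpow_neg_mul_integral_exp_neg_div_mul_norm_sub_sq_add (inv_pos.2 hc) ht] using h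

end GaussianProduct

lemma rpow_pi_div_mul_exp_le {c t e s : ℝ} (hc : 0 < c) (ht : 0 ≤ t) (he : 0 ≤ e)
    (hs : 0 ≤ s) :
    (π / (c⁻¹ * (1 + t))) ^ e * exp (-(c⁻¹ / (1 + t)) * s)
      ≤ (π * c) ^ e * exp (-s / (c * (1 + 2 * t))) := by
  have hπ := pi_pos
  gcongr ?_ ^ e * exp ?_
  · rw [div_le_iff₀ (by positivity)]
    field_simp
    nlinarith
  · rw [neg_div, neg_mul, neg_le_neg_iff, div_mul_eq_mul_div,
      div_le_div_iff₀ (by positivity) (by positivity)]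
    field_simp
    nlinarith

lemma le_rpow_pi_div_mul_exp {c t e s : ℝ} (hc : 0 < c) (ht : 0 ≤ t) (he : 0 ≤ e)
    (hs : 0 ≤ s) :
    ((π * c) ^ e)⁻¹ * (1 + 2 * t) ^ (-e) * exp (-2 * c * s)
      ≤ (π / (c * (1 + t))) ^ e * exp (-(c / (1 + t)) * s) := by
  have hπ : 1 < π := by linarith [pi_gt_three]
  rw [rpow_neg (by linarith), ← inv_rpow (by positivity), ← inv_rpow (by linarith),
    ← mul_rpow (by positivity) (by positivity), ← mul_inv]
  gcongr ?_ ^ e * exp ?_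
  · rw [inv_le_iff_one_le_mul₀ (by positivity)]
    field_simp
    nlinarith [one_le_pow₀ (n := 2) hπ.le]
  · have : c / (1 + t) ≤ 2 * c := by
      rw [div_le_iff₀ (by positivity)]
      nlinarith
    nlinarith [mul_le_mul_of_nonneg_right this hs]

theorem density_gaussian_bounds_general
    (d : ℕ) (T : ℝ) (c C : ℝ) (hc : 1 < c) (hC : 1 < C)
    (p₀ : EuclideanSpace ℝ (Fin d) → ℝ) (hp₀_meas : Measurable p₀)
    (hp₀ : ∀ x, C⁻¹ * Real.exp (-c * ‖x‖ ^ 2) ≤ p₀ x ∧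
                p₀ x ≤ C * Real.exp (-‖x‖ ^ 2 / c))
    (p : ℝ → EuclideanSpace ℝ (Fin d) → EuclideanSpace ℝ (Fin d) → ℝ)
    (hp_meas : ∀ t x, Measurable (p t x))
    (hp : ∀ t ∈ Set.Ioc (0 : ℝ) T, ∀ x ξ,
      C⁻¹ * t ^ (-(d : ℝ) / 2) * Real.exp (-c * ‖x - ξ‖ ^ 2 / t) ≤ p t x ξ ∧
      p t x ξ ≤ C * t ^ (-(d : ℝ) / 2) * Real.exp (-‖x - ξ‖ ^ 2 / (c * t))) :
    ∃ C' : ℝ, 1 < C' ∧ ∀ t ∈ Set.Ioc (0 : ℝ) T, ∀ x,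
      C'⁻¹ * (1 + 2 * t) ^ (-(d : ℝ) / 2) * Real.exp (-2 * c * ‖x‖ ^ 2)
          ≤ (∫ ξ, p t x ξ * p₀ ξ) ∧
      (∫ ξ, p t x ξ * p₀ ξ) ≤ C' * Real.exp (-‖x‖ ^ 2 / (c * (1 + 2 * t))) := by
  have hc₀ : 0 < c := by linarith
  have he : 0 ≤ (d : ℝ) / 2 := by positivity
  refine ⟨C ^ 2 * (π * c) ^ ((d : ℝ) / 2), one_lt_mul_of_lt_of_le (one_lt_pow₀ hC two_ne_zero)
    (one_le_rpow (by nlinarith [pi_gt_three]) he), ?_⟩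
  intro t ht x
  obtain ⟨hlo, hup⟩ := integral_mul_mem_Icc_of_gaussian_bounds (V := EuclideanSpace ℝ (Fin d))
    hc₀ (by linarith) ht.1 (hp_meas t x) hp₀_meas x
    (by rw [finrank_euclideanSpace_fin]; exact hp t ht x) hp₀
  rw [finrank_euclideanSpace_fin] at hlo hup
  constructor
  · calc _ = C⁻¹ ^ 2 * (((π * c) ^ ((d : ℝ) / 2))⁻¹ * (1 + 2 * t) ^ (-((d : ℝ) / 2))
          * exp (-2 * c * ‖x‖ ^ 2)) := by rw [neg_div, mul_inv, inv_pow]; ring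
      _ ≤ _ := mul_le_mul_of_nonneg_left
          (le_rpow_pi_div_mul_exp hc₀ ht.1.le he (sq_nonneg _)) (by positivity)
      _ ≤ _ := hlo
  · rw [mul_assoc]
    exact hup.trans <| mul_le_mul_of_nonneg_left
      (rpow_pi_div_mul_exp_le hc₀ ht.1.le he (sq_nonneg _)) (by positivity)

/-- If the initial density p₀ and the transition kernel p satisfy
two-sided Gaussian (Aronson) bounds with constants c, C > 1 on (0, T], then the
time-t density x ↦ ∫ p(t, x; ξ) p₀(ξ) dξ satisfies the two-sided Gaussian bounds
(C')⁻¹ (1+2t)^{-d/2} exp(−2c|x|²) ≤ p(t, x) ≤ C' exp(−|x|²/(c(1+2t))) for a constant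
C' > 1 depending only on c, C and d. -/
theorem density_gaussian_bounds
    (d : ℕ) (T : ℝ) (hT : 0 < T) (c C : ℝ) (hc : 1 < c) (hC : 1 < C)
    (p₀ : EuclideanSpace ℝ (Fin d) → ℝ) (hp₀_meas : Measurable p₀)
    (hp₀ : ∀ x, C⁻¹ * Real.exp (-c * ‖x‖ ^ 2) ≤ p₀ x ∧
                p₀ x ≤ C * Real.exp (-‖x‖ ^ 2 / c))
    (p : ℝ → EuclideanSpace ℝ (Fin d) → EuclideanSpace ℝ (Fin d) → ℝ)
    (hp_meas : ∀ t x, Measurable (p t x))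
    (hp_nonneg : ∀ t x ξ, 0 ≤ p t x ξ)
    (hp : ∀ t ∈ Set.Ioc (0 : ℝ) T, ∀ x ξ,
      C⁻¹ * t ^ (-(d : ℝ) / 2) * Real.exp (-c * ‖x - ξ‖ ^ 2 / t) ≤ p t x ξ ∧
      p t x ξ ≤ C * t ^ (-(d : ℝ) / 2) * Real.exp (-‖x - ξ‖ ^ 2 / (c * t))) :
    ∃ C' : ℝ, 1 < C' ∧ ∀ t ∈ Set.Ioc (0 : ℝ) T, ∀ x,
      C'⁻¹ * (1 + 2 * t) ^ (-(d : ℝ) / 2) * Real.exp (-2 * c * ‖x‖ ^ 2)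
          ≤ (∫ ξ, p t x ξ * p₀ ξ) ∧
      (∫ ξ, p t x ξ * p₀ ξ) ≤ C' * Real.exp (-‖x‖ ^ 2 / (c * (1 + 2 * t))) :=
  density_gaussian_bounds_general d T c C hc hC p₀ hp₀_meas hp₀ p hp_meas hp
end
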